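/- arXiv:1408.2851 — 2 statements merged into one kernel-verified Lean document; each statement's English description precedes it below -/
import Mathlib

section
/- Property (S*) holds if and only if property (B*) holds. That is: there exists a sequence (φₙ : ω₁ → ω₁)ₙ∈ℕ such that for every subset I of ω₁ of cardinality ℵ₁, φₙ '' I = ω₁ for all but finitely many n, if and only if there exists a sequence (ψₙ : ω₁ → ω₁)ₙ∈ℕ such that for every subset I of ω₁ of cardinality ℵ₁, for all but finitely many n, for every β ∈ ω₁ the set {α ∈ I : ψₙ(α) = β} is uncountable. -/
/-!
Given (S*), compose each `φ n` with a bijection `ω₁ ≃ ω₁ × ω₁` and the first projection. When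
`φ n` maps `I` onto `ω₁`, the second coordinate maps each fibre of the composite onto `ω₁`, so
every fibre is uncountable. Conversely, uncountable fibres are nonempty, so a (B*) sequence is
itself an (S*) sequence.
-/

open Cardinal Set

universe u

/-- ω₁, the first uncountable ordinal, viewed as the set of all countable ordinals. -/
abbrev Omega1 := {o : Ordinal.{0} // o < (Cardinal.aleph 1).ord}

lemma mk_Omega1 : #Omega1 = ℵ₁ := by
  have h := mk_Iio_ordinal (aleph 1).ord
  rwa [card_ord, lift_aleph, Ordinal.lift_one] at h

lemma mk_le_mk_fiber_fst_of_image_eq_univ {α γ : Type u} {β : Type*} {f : α → β × γ}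
    {I : Set α} (hf : f '' I = Set.univ) (b : β) : #γ ≤ #{a ∈ I | (f a).1 = b} := by
  refine mk_le_of_surjective (f := fun a : {a ∈ I | (f a).1 = b} => (f a).2) fun c => ?_
  obtain ⟨a, ha, hfa⟩ : (b, c) ∈ f '' I := hf ▸ Set.mem_univ _
  exact ⟨⟨a, ha, by rw [hfa]⟩, by simp [hfa]⟩

lemma exists_fiber_eq_empty_of_image_ne_univ {α β : Type*} {f : α → β} {I : Set α}
    (hf : f '' I ≠ Set.univ) : ∃ b, {a ∈ I | f a = b} = ∅ := by
  obtain ⟨b, hb⟩ := ne_univ_iff_exists_notMem _ |>.mp hf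
  exact ⟨b, eq_empty_of_forall_notMem fun a ha => hb ⟨a, ha⟩⟩

lemma not_countable_of_aleph_one_le_mk {α : Type*} {s : Set α} (hs : ℵ₁ ≤ #s) :
    ¬ s.Countable := fun hc =>
  (hs.trans hc.le_aleph0).not_gt aleph0_lt_aleph_one

/-- Property (S*) holds if and only if property (B*) holds. -/
theorem Sstar_iff_Bstar :
    (∃ φ : ℕ → Omega1 → Omega1,
      ∀ I : Set Omega1, #I = Cardinal.aleph 1 →
        {n : ℕ | φ n '' I ≠ Set.univ}.Finite) ↔
    (∃ ψ : ℕ → Omega1 → Omega1,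
      ∀ I : Set Omega1, #I = Cardinal.aleph 1 →
        {n : ℕ | ∃ β : Omega1, {α ∈ I | ψ n α = β}.Countable}.Finite) := by
  constructor
  · rintro ⟨φ, hφ⟩
    obtain ⟨p⟩ : Nonempty (Omega1 ≃ Omega1 × Omega1) := Cardinal.eq.mp <| by
      rw [mk_prod, lift_id, mul_eq_self (mk_Omega1 ▸ aleph0_le_aleph 1)]
    refine ⟨fun n α => (p (φ n α)).1, fun I hI => (hφ I hI).subset fun n hn => ?_⟩
    obtain ⟨β, hβ⟩ := hn
    intro hsurj
    have hpφ : (p ∘ φ n) '' I = Set.univ := by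
      rw [image_comp, hsurj, image_univ_of_surjective p.surjective]
    exact not_countable_of_aleph_one_le_mk
      (mk_Omega1 ▸ mk_le_mk_fiber_fst_of_image_eq_univ hpφ β) hβ
  · rintro ⟨ψ, hψ⟩
    refine ⟨ψ, fun I hI => (hψ I hI).subset fun n hn => ?_⟩
    obtain ⟨β, hβ⟩ := exists_fiber_eq_empty_of_image_ne_univ hn
    exact ⟨β, hβ ▸ countable_empty⟩
end

section
/- If there exists a Luzin set in Baire space ℕ → ℕ, then property (*) holds: there exists a sequence (φₙ : ω₁ → ω₁)ₙ∈ℕ such that for every subset I of ω₁ of cardinality ℵ₁ there exists n with φₙ '' I = ω₁. -/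
open Cardinal Set

/-!
Fix injections `e α : α → ℕ` (`α < ω₁`) that are coherent, i.e. `e α` and `e β` agree on `β`
up to finitely many points, and an injective family `x α` of points of the Luzin set. Let
`φ n α` be the `β < α` with `e α β = x α n`. If `I` is uncountable and `β n ∉ φ n '' I` for
every `n`, take `γ` above all `β n`. By coherence the restrictions of `e α` to `γ` form a
countable set, so uncountably many `α ∈ I` share one restriction `g`; each such `x α` then
avoids `t = (g (β n))ₙ` in every coordinate, a closed nowhere dense condition on `x α`, which
contradicts the Luzin property.

The coherent sequence is built by transfinite recursion, first with finite-to-one maps (gluing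
the earlier maps along an enumeration of `α`), which are then made injective by pairing each
value with the number of earlier points sharing it.
-/

section FiniteToOne

variable {α β : Type*}

def FiniteToOneOn (f : α → β) (s : Set α) : Prop :=
  ∀ m, {ξ | ξ ∈ s ∧ f ξ = m}.Finite

theorem FiniteToOneOn.mono {f : α → β} {s t : Set α} (hf : FiniteToOneOn f t) (hst : s ⊆ t) :
    FiniteToOneOn f s :=
  fun m => (hf m).subset fun _ hξ => ⟨hst hξ.1, hξ.2⟩

theorem FiniteToOneOn.finite_inter_preimage {f : α → β} {s : Set α} (hf : FiniteToOneOn f s)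
    {T : Set β} (hT : T.Finite) : (s ∩ f ⁻¹' T).Finite :=
  (hT.biUnion fun m _ => hf m).subset fun _ hξ => mem_biUnion hξ.2 ⟨hξ.1, rfl⟩

def AlmostEqOn (s : Set α) (f g : α → β) : Prop :=
  {ξ | ξ ∈ s ∧ f ξ ≠ g ξ}.Finite

theorem AlmostEqOn.refl (s : Set α) (f : α → β) : AlmostEqOn s f f := by
  simp [AlmostEqOn]

theorem AlmostEqOn.symm {s : Set α} {f g : α → β} (h : AlmostEqOn s f g) : AlmostEqOn s g f := by
  simpa only [AlmostEqOn, ne_comm] using h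

theorem AlmostEqOn.trans {s : Set α} {f g h : α → β} (hfg : AlmostEqOn s f g)
    (hgh : AlmostEqOn s g h) : AlmostEqOn s f h :=
  (hfg.union hgh).subset fun ξ ⟨hξ, hne⟩ =>
    (em (f ξ = g ξ)).elim (fun heq => Or.inr ⟨hξ, heq ▸ hne⟩) fun hne' => Or.inl ⟨hξ, hne'⟩

end FiniteToOne

section Coherent

variable {ι : Type*} [LinearOrder ι]

def IsCoherentAt (e : ι → ι → ℕ) (α : ι) (f : ι → ℕ) : Prop :=
  FiniteToOneOn f (Iio α) ∧ ∀ β < α, AlmostEqOn (Iio β) f (e β)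

theorem IsCoherentAt.congr {e e' : ι → ι → ℕ} {α : ι} {f : ι → ℕ} (h : IsCoherentAt e α f)
    (hee' : ∀ β < α, e β = e' β) : IsCoherentAt e' α f :=
  ⟨h.1, fun β hβ => hee' β hβ ▸ h.2 β hβ⟩

/-- Stage `k` is `e (b k)` raised to at least `k`: a value `m` is then only taken at the
points `b 0, …, b m` and at finitely many points below them. -/
noncomputable def glueAlong (e : ι → ι → ℕ) (b : ℕ → ι) (ξ : ι) : ℕ :=
  open Classical in
  if h : ∃ k, ξ ≤ b k then max (Nat.find h) (e (b (Nat.find h)) ξ) else 0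

theorem exists_glueAlong_eq (e : ι → ι → ℕ) {b : ℕ → ι} {ξ : ι} (h : ∃ k, ξ ≤ b k) :
    ∃ k, ξ ≤ b k ∧ (∀ j, ξ ≤ b j → k ≤ j) ∧ glueAlong e b ξ = max k (e (b k) ξ) := by
  classical
  refine ⟨Nat.find h, Nat.find_spec h, fun j hj => Nat.find_min' h hj, ?_⟩
  rw [glueAlong, dif_pos h]

variable {e : ι → ι → ℕ} {b : ℕ → ι}

theorem finiteToOneOn_glueAlong {s : Set ι} (hcov : ∀ ξ ∈ s, ∃ k, ξ ≤ b k)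
    (he : ∀ k, FiniteToOneOn (e (b k)) (Iio (b k))) : FiniteToOneOn (glueAlong e b) s := by
  intro m
  refine ((finite_Iic m).biUnion fun k _ =>
    (finite_singleton (b k)).union ((he k).finite_inter_preimage (finite_Iic m))).subset ?_
  rintro ξ ⟨hξ, rfl⟩
  obtain ⟨k, hk, -, hglue⟩ := exists_glueAlong_eq e (hcov ξ hξ)
  refine mem_biUnion (x := k) (by simp [hglue]) ?_
  rcases hk.eq_or_lt with rfl | hlt
  · exact Or.inl rfl
  · exact Or.inr ⟨hlt, by simp [hglue]⟩

theorem almostEqOn_glueAlong {β : ι} {K : ℕ} (hK : β ≤ b K)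
    (he : ∀ k, FiniteToOneOn (e (b k)) (Iio (b k)))
    (hcoh : ∀ k j, b k ≤ b j → AlmostEqOn (Iio (b k)) (e (b j)) (e (b k))) :
    AlmostEqOn (Iio β) (glueAlong e b) (e (b K)) := by
  have hpair : ∀ k, {ξ | ξ < b k ∧ ξ < b K ∧ e (b k) ξ ≠ e (b K) ξ}.Finite := fun k => by
    rcases le_total (b k) (b K) with h | h
    · exact (hcoh k K h).symm.subset fun ξ hξ => ⟨hξ.1, hξ.2.2⟩
    · exact (hcoh K k h).subset fun ξ hξ => ⟨hξ.2.1, hξ.2.2⟩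
  refine ((finite_Iic K).biUnion fun k _ => ((finite_singleton (b k)).union
    ((he k).finite_inter_preimage (finite_Iio k))).union (hpair k)).subset ?_
  rintro ξ ⟨hξ, hne⟩
  obtain ⟨k, hk, hmin, hglue⟩ := exists_glueAlong_eq e ⟨K, (mem_Iio.mp hξ).le.trans hK⟩
  refine mem_biUnion (mem_Iic.mpr (hmin K ((mem_Iio.mp hξ).le.trans hK))) ?_
  rcases hk.eq_or_lt with rfl | hlt
  · exact Or.inl (Or.inl rfl)
  by_cases hsmall : e (b k) ξ < k
  · exact Or.inl (Or.inr ⟨hlt, hsmall⟩)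
  · rw [hglue, max_eq_right (not_lt.mp hsmall)] at hne
    exact Or.inr ⟨hlt, (mem_Iio.mp hξ).trans_le hK, hne⟩

theorem exists_isCoherentAt {α : ι} (hα : (Iio α).Countable)
    (he : ∀ β < α, IsCoherentAt e β (e β)) : ∃ f, IsCoherentAt e α f := by
  rcases (Iio α).eq_empty_or_nonempty with hempty | hne
  · refine ⟨0, fun m => ?_, fun β hβ =>
    (eq_empty_iff_forall_notMem.mp hempty β hβ).elim⟩
    simp [hempty]
  obtain ⟨b, hb⟩ := hα.exists_eq_range hne
  have hbα : ∀ k, b k < α := fun k => (hb.symm ▸ mem_range_self k : b k ∈ Iio α)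
  have hcov : ∀ ξ < α, ∃ k, ξ ≤ b k := fun ξ hξ => by
    obtain ⟨k, hk⟩ := (hb ▸ hξ : ξ ∈ range b)
    exact ⟨k, hk.ge⟩
  have hcoh : ∀ β γ, β ≤ γ → γ < α → AlmostEqOn (Iio β) (e γ) (e β) := fun β γ hβγ hγ => by
    rcases hβγ.eq_or_lt with rfl | hlt
    · exact AlmostEqOn.refl _ _
    · exact (he γ hγ).2 β hlt
  refine ⟨glueAlong e b, finiteToOneOn_glueAlong hcov fun k => (he _ (hbα k)).1, fun β hβ => ?_⟩
  obtain ⟨K, hK⟩ := hcov β hβ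
  exact (almostEqOn_glueAlong hK (fun k => (he _ (hbα k)).1)
    fun k j hkj => hcoh _ _ hkj (hbα j)).trans (hcoh β (b K) hK (hbα K))

theorem exists_forall_isCoherentAt [WellFoundedLT ι] (hι : ∀ α : ι, (Iio α).Countable) :
    ∃ e : ι → ι → ℕ, ∀ α, IsCoherentAt e α (e α) := by
  classical
  let below (α : ι) (prev : ∀ β < α, ι → ℕ) (β : ι) : ι → ℕ :=
    if h : β < α then prev β h else 0
  let step (α : ι) (prev : ∀ β < α, ι → ℕ) : ι → ℕ :=
    if h : ∃ f, IsCoherentAt (below α prev) α f then h.choose else 0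
  let e : ι → ι → ℕ := wellFounded_lt.fix step
  refine ⟨e, fun α => ?_⟩
  induction α using WellFoundedLT.induction with | _ α ih
  have hbelow : ∀ β < α, below α (fun β _ => e β) β = e β := fun β hβ => dif_pos hβ
  have hex : ∃ f, IsCoherentAt (below α fun β _ => e β) α f :=
    exists_isCoherentAt (hι α) fun β hβ => by
      rw [hbelow β hβ]
      exact (ih β hβ).congr fun γ hγ => (hbelow γ (hγ.trans hβ)).symm
  have hfix : e α = step α fun β _ => e β := wellFounded_lt.fix_eq step α
  rw [hfix]
  simp only [step, dif_pos hex]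
  exact hex.choose_spec.congr hbelow

end Coherent

section Injectivize

variable {ι : Type*} [LinearOrder ι]

noncomputable def injectivize (f : ι → ℕ) (ξ : ι) : ℕ :=
  Nat.pair (f ξ) {ζ | ζ < ξ ∧ f ζ = f ξ}.ncard

theorem injOn_injectivize {f : ι → ℕ} {α : ι} (hf : FiniteToOneOn f (Iio α)) :
    InjOn (injectivize f) (Iio α) := by
  have key : ∀ ξ ∈ Iio α, ∀ ζ ∈ Iio α, ξ < ζ → injectivize f ξ ≠ injectivize f ζ := by
    intro ξ _ ζ hζ hlt h
    obtain ⟨hval, hcard⟩ := Nat.pair_eq_pair.mp h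
    have hssub : {η | η < ξ ∧ f η = f ξ} ⊂ {η | η < ζ ∧ f η = f ζ} :=
      ⟨fun η hη => ⟨hη.1.trans hlt, hη.2.trans hval⟩, fun h => lt_irrefl ξ (h ⟨hlt, hval⟩).1⟩
    exact hcard.not_lt (ncard_lt_ncard hssub ((hf (f ζ)).subset fun η hη => ⟨hη.1.trans hζ, hη.2⟩))
  intro ξ hξ ζ hζ h
  by_contra hne
  rcases lt_or_gt_of_ne hne with hlt | hlt
  · exact key ξ hξ ζ hζ hlt h
  · exact key ζ hζ ξ hξ hlt h.symm

/-- Off the finite set where `f ≠ g`, the codes of `ξ` can only differ if `f ξ` is a value that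
`f` or `g` takes at a point of that set. -/
theorem almostEqOn_injectivize {f g : ι → ℕ} {β : ι} (hf : FiniteToOneOn f (Iio β))
    (hfg : AlmostEqOn (Iio β) f g) : AlmostEqOn (Iio β) (injectivize f) (injectivize g) := by
  refine (hfg.union (hf.finite_inter_preimage ((hfg.image f).union (hfg.image g)))).subset ?_
  rintro ξ ⟨hξ, hne⟩
  by_contra! hout
  obtain ⟨hξD, hξimg⟩ := not_or.mp hout
  have hval : f ξ = g ξ := not_not.mp fun h => hξD ⟨hξ, h⟩
  refine hne (congrArg₂ Nat.pair hval (congrArg ncard (ext fun ζ => ?_)))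
  simp only [mem_ofPred_eq, ← hval]
  refine and_congr_right fun hζ => ⟨fun h => ?_, fun h => ?_⟩ <;> by_contra h'
  · exact hξimg ⟨hξ, Or.inl ⟨ζ, ⟨hζ.trans hξ, fun e => h' (e ▸ h)⟩, h⟩⟩
  · exact hξimg ⟨hξ, Or.inr ⟨ζ, ⟨hζ.trans hξ, fun e => h' (e.trans h)⟩, h⟩⟩

theorem exists_coherent_injOn [WellFoundedLT ι] (hι : ∀ α : ι, (Iio α).Countable) :
    ∃ e : ι → ι → ℕ, (∀ α, InjOn (e α) (Iio α)) ∧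
      ∀ α, ∀ β < α, AlmostEqOn (Iio β) (e α) (e β) := by
  obtain ⟨c, hc⟩ := exists_forall_isCoherentAt hι
  exact ⟨fun α => injectivize (c α), fun α => injOn_injectivize (hc α).1, fun α β hβ =>
    almostEqOn_injectivize ((hc α).1.mono (Iio_subset_Iio hβ.le)) ((hc α).2 β hβ)⟩

end Injectivize

theorem countable_setOf_finite_ne {α β : Type*} [Countable α] [Countable β] (g₀ : α → β) :
    {g : α → β | {i | g i ≠ g₀ i}.Finite}.Countable := by
  classical
  refine (countable_iUnion fun D : Finset α =>
    countable_range fun h : D → β => fun i => if hi : i ∈ D then h ⟨i, hi⟩ else g₀ i).mono ?_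
  intro g hg
  refine mem_iUnion.mpr ⟨hg.toFinset, fun i => g i, funext fun i => ?_⟩
  by_cases hi : i ∈ hg.toFinset
  · simp [hi]
  · simp only [hi, dif_neg, not_false_eq_true]
    simpa [eq_comm] using hi

theorem exists_not_countable_fiber {α β : Type*} {S : Set α} (hS : ¬ S.Countable) {T : Set β}
    (hT : T.Countable) {f : α → β} (hf : MapsTo f S T) :
    ∃ b, ¬ {a | a ∈ S ∧ f a = b}.Countable := by
  by_contra! h
  refine hS ((hT.biUnion fun b _ => h b).mono fun a ha => mem_biUnion (hf ha) ?_)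
  exact ⟨ha, rfl⟩

section Decode

variable {ι : Type*} [LinearOrder ι]

noncomputable def decode (e : ι → ι → ℕ) (x : ι → ℕ → ℕ) (n : ℕ) (α : ι) : ι :=
  open Classical in
  if h : ∃ β < α, e α β = x α n then h.choose else α

theorem decode_eq {e : ι → ι → ℕ} {x : ι → ℕ → ℕ} {n : ℕ} {α β : ι}
    (hinj : InjOn (e α) (Iio α)) (hβ : β < α) (hval : e α β = x α n) : decode e x n α = β := by
  have h : ∃ β < α, e α β = x α n := ⟨β, hβ, hval⟩
  rw [decode, dif_pos h]
  exact hinj h.choose_spec.1 hβ (h.choose_spec.2.trans hval.symm)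

theorem exists_not_countable_domRestrict_eq {e : ι → ι → ℕ}
    (he : ∀ α, ∀ β < α, AlmostEqOn (Iio β) (e α) (e β)) {γ : ι} (hγ : (Iio γ).Countable)
    {J : Set ι} (hJ : ¬ J.Countable) (hJγ : ∀ α ∈ J, γ ≤ α) :
    ∃ g : Iio γ → ℕ, ¬ {α | α ∈ J ∧ (Iio γ).domRestrict (e α) = g}.Countable := by
  have := hγ.to_subtype
  refine exists_not_countable_fiber hJ (countable_setOf_finite_ne ((Iio γ).domRestrict (e γ)))
    fun α hα => ?_
  rcases (hJγ α hα).eq_or_lt with rfl | hlt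
  · simp
  · exact ((he α γ hlt).preimage Subtype.val_injective.injOn).subset fun ξ hξ => ⟨ξ.2, hξ⟩

end Decode

theorem countable_Iio_omega1 (α : Omega1) : (Iio α).Countable := by
  have h : (Iio α.1).Countable := by
    rw [← le_aleph0_iff_set_countable, Cardinal.mk_Iio_ordinal, lift_le_aleph0,
      ← lt_aleph_one_iff]
    exact lt_ord.mp α.2
  exact h.preimage Subtype.val_injective

theorem exists_omega1_forall_lt (β : ℕ → Omega1) : ∃ γ : Omega1, ∀ n, β n < γ := by
  have hlim : Order.IsSuccLimit (aleph 1).ord := isSuccLimit_ord (aleph0_le_aleph 1)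
  have h : ⨆ n, Order.succ (β n).1 < Ordinal.omega 1 :=
    Ordinal.iSup_lt_omega_one fun n => ord_aleph 1 ▸ hlim.succ_lt (β n).2
  exact ⟨⟨_, h.trans_eq (ord_aleph 1).symm⟩, fun n => show (β n).1 < _ from
    (Order.lt_succ _).trans_le (Ordinal.le_iSup (fun n => Order.succ (β n).1) n)⟩

theorem mk_omega1 : #Omega1 = lift.{1, 0} (aleph 1) := by
  rw [← card_ord (aleph 1), ← mk_Iio_ordinal]
  rfl

theorem exists_injective_omega1_mem {L : Set (ℕ → ℕ)} (hL : ¬ L.Countable) :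
    ∃ x : Omega1 → ℕ → ℕ, Function.Injective x ∧ ∀ α, x α ∈ L := by
  have : lift.{0} #Omega1 ≤ lift.{1} #L := by
    rw [mk_omega1, lift_lift, lift_le, aleph_one_le_iff, ← not_le, le_aleph0_iff_set_countable]
    exact hL
  obtain ⟨f⟩ := lift_mk_le'.mp this
  exact ⟨fun α => f α, fun a b h => f.injective (Subtype.ext h), fun α => (f α).2⟩

theorem isMeagre_setOf_forall_ne (t : ℕ → ℕ) : IsMeagre {y : ℕ → ℕ | ∀ n, y n ≠ t n} := by
  have hclosed : IsClosed {y : ℕ → ℕ | ∀ n, y n ≠ t n} := by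
    simp only [ofPred_forall]
    exact isClosed_iInter fun n =>
      (isClosed_discrete ({t n}ᶜ : Set ℕ)).preimage (continuous_apply (A := fun _ : ℕ => ℕ) n)
  refine IsNowhereDense.isMeagre ?_
  rw [hclosed.isNowhereDense_iff, interior_eq_empty_iff_dense_compl]
  refine fun y => mem_closure_of_tendsto (f := fun k => Function.update y k (t k))
    (b := Filter.atTop) ?_ (Filter.Eventually.of_forall fun k hk => hk k (by simp))
  refine tendsto_pi_nhds.mpr fun i => tendsto_const_nhds.congr' ?_
  filter_upwards [Filter.eventually_gt_atTop i] with k hk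
  simp [Function.update_of_ne hk.ne]

/-- If there is a Luzin set in Baire space, then property (*) holds. -/
theorem luzin_implies_star
    (L : Set (ℕ → ℕ)) (hunc : ¬ L.Countable)
    (hL : ∀ M : Set (ℕ → ℕ), IsMeagre M → (L ∩ M).Countable) :
    ∃ φ : ℕ → Omega1 → Omega1,
      ∀ I : Set Omega1, #I = Cardinal.aleph 1 →
        ∃ n : ℕ, φ n '' I = Set.univ := by
  obtain ⟨x, hx_inj, hxL⟩ := exists_injective_omega1_mem hunc
  obtain ⟨e, he_inj, he_coh⟩ := exists_coherent_injOn countable_Iio_omega1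
  refine ⟨decode e x, fun I hI => ?_⟩
  by_contra! hmiss
  choose β hβ using fun n => (ne_univ_iff_exists_notMem _).mp (hmiss n)
  obtain ⟨γ, hβγ⟩ := exists_omega1_forall_lt β
  have hI_unc : ¬ I.Countable := by
    rw [← le_aleph0_iff_set_countable, hI]
    exact aleph0_lt_aleph_one.not_ge
  have hJ : ¬ {α | α ∈ I ∧ γ ≤ α}.Countable := fun hJ => hI_unc <|
    (hJ.union (countable_Iio_omega1 γ)).mono fun α hα => (le_or_gt γ α).imp (⟨hα, ·⟩) id
  obtain ⟨g, hg⟩ := exists_not_countable_domRestrict_eq he_coh (countable_Iio_omega1 γ) hJ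
    fun α hα => hα.2
  refine hg (((hL _ (isMeagre_setOf_forall_ne fun n => g ⟨β n, hβγ n⟩)).preimage hx_inj).mono ?_)
  rintro α ⟨⟨hαI, hγα⟩, rfl⟩
  exact ⟨hxL α, fun n hn =>
    hβ n ⟨α, hαI, decode_eq (he_inj α) ((hβγ n).trans_le hγα) hn.symm⟩⟩
end
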